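/- arXiv:1607.05838 — 8 statements merged into one kernel-verified Lean document; each statement's English description precedes it below -/
import Mathlib

section
/- Let F be a field, n a positive integer, and A ∈ F^{n×n} a matrix whose null space has dimension k₀ (the nullity of A). Then the twisted centralizer code C_F(A,0) has dimension k₀·n. In particular, if A ≠ 0 then dim C_F(A,0) ≤ n(n−1) and every matrix in C_F(A,0) is singular. -/
/-!
For `λ = 0` the code is `{B | A * B = 0}`, i.e. the matrices all of whose columns lie in the
column kernel of `A`; so its dimension is `n` times `n - rank A`. By rank–nullity and
`rank Aᵀ = rank A`, the row nullity `k₀` is also `n - rank A`. If `A ≠ 0` then `rank A ≥ 1`, and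
no unit `B` can satisfy `A * B = 0`.
-/

open Matrix Module

/-- The twisted centralizer code `C_F(A,λ) = {B | A*B - λ*B*A = 0}`. -/
noncomputable def twistedCentralizer {F : Type*} [Field F] {m : Type*} [Fintype m] [DecidableEq m]
    (A : Matrix m m F) (lam : F) : Submodule F (Matrix m m F) :=
  LinearMap.ker (LinearMap.mulLeft F A - lam • LinearMap.mulRight F A)

section

variable {F : Type*} [Field F] {l m n : Type*}

theorem Matrix.mul_eq_zero_iff_forall_mulVec_col [Fintype m] {A : Matrix l m F}
    {B : Matrix m n F} : A * B = 0 ↔ ∀ j, A *ᵥ B.col j = 0 :=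
  ⟨fun h j => congr(($h).col j), fun h => ext_col h⟩

theorem Matrix.finrank_ker_mulVecLin [Fintype n] (A : Matrix m n F) :
    finrank F (LinearMap.ker A.mulVecLin) = Fintype.card n - A.rank := by
  have rank_nullity := LinearMap.finrank_range_add_finrank_ker A.mulVecLin
  rw [finrank_pi] at rank_nullity
  rw [rank]
  omega

theorem Matrix.finrank_ker_vecMulLinear [Fintype m] [Fintype n] (A : Matrix m n F) :
    finrank F (LinearMap.ker A.vecMulLinear) = Fintype.card m - A.rank := by
  rw [← mulVecLin_transpose, finrank_ker_mulVecLin, rank_transpose]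

theorem Matrix.rank_pos_of_ne_zero [Fintype n] {A : Matrix m n F} (hA : A ≠ 0) : 0 < A.rank := by
  refine Nat.pos_of_ne_zero fun h => hA ?_
  rw [rank, Submodule.finrank_eq_zero, LinearMap.range_eq_bot] at h
  exact ext_iff_mulVec.mpr fun v => by simpa using LinearMap.congr_fun h v

variable [Fintype m] [DecidableEq m]

theorem mem_twistedCentralizer_zero {A B : Matrix m m F} :
    B ∈ twistedCentralizer A 0 ↔ A * B = 0 := by
  simp [twistedCentralizer]

noncomputable def twistedCentralizerZeroEquivCols (A : Matrix m m F) :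
    twistedCentralizer A 0 ≃ₗ[F] (m → LinearMap.ker A.mulVecLin) where
  toFun B j := ⟨B.1.col j, (mul_eq_zero_iff_forall_mulVec_col.mp
    (mem_twistedCentralizer_zero.mp B.2)) j⟩
  invFun v := ⟨(of fun j => (v j).1)ᵀ, mem_twistedCentralizer_zero.mpr
    (mul_eq_zero_iff_forall_mulVec_col.mpr fun j => (v j).2)⟩
  map_add' _ _ := rfl
  map_smul' _ _ := rfl
  left_inv _ := rfl
  right_inv _ := rfl

theorem finrank_twistedCentralizer_zero (A : Matrix m m F) :
    finrank F (twistedCentralizer A 0) = Fintype.card m * (Fintype.card m - A.rank) := by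
  rw [(twistedCentralizerZeroEquivCols A).finrank_eq, finrank_pi_fintype, finrank_ker_mulVecLin,
    Finset.sum_const, Finset.card_univ, smul_eq_mul]

end

theorem dim_twistedCentralizer_zero_general {F : Type*} [Field F] {n : ℕ}
    (A : Matrix (Fin n) (Fin n) F) (k₀ : ℕ)
    (hk : k₀ = finrank F (LinearMap.ker A.vecMulLinear)) :
    finrank F (twistedCentralizer A 0) = k₀ * n ∧
    (A ≠ 0 → finrank F (twistedCentralizer A 0) ≤ n * (n - 1) ∧
      ∀ B ∈ twistedCentralizer A 0, ¬ IsUnit B) := by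
  rw [finrank_twistedCentralizer_zero, Fintype.card_fin]
  refine ⟨by rw [hk, finrank_ker_vecMulLinear, Fintype.card_fin, mul_comm], fun hA => ⟨?_, ?_⟩⟩
  · have hrank := rank_pos_of_ne_zero hA
    gcongr
    omega
  · intro B hB hB_unit
    exact hA (hB_unit.mul_left_eq_zero.mp (mem_twistedCentralizer_zero.mp hB))

theorem dim_twistedCentralizer_zero {F : Type*} [Field F] {n : ℕ} (hn : 0 < n)
    (A : Matrix (Fin n) (Fin n) F) (k₀ : ℕ)
    (hk : k₀ = finrank F (LinearMap.ker A.vecMulLinear)) :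
    finrank F (twistedCentralizer A 0) = k₀ * n ∧
    (A ≠ 0 → finrank F (twistedCentralizer A 0) ≤ n * (n - 1) ∧
      ∀ B ∈ twistedCentralizer A 0, ¬ IsUnit B) :=
  dim_twistedCentralizer_zero_general A k₀ hk
end

section
/- Let F be a field, λ ∈ F with λ ≠ 0, and let A ∈ F^{n×n} be the block diagonal matrix diag(A₁, A₂) where A₁ ∈ F^{m×m} is nilpotent and A₂ ∈ F^{(n−m)×(n−m)} is invertible. Then C_F(A,λ) is isomorphic as an F-vector space to C_F(A₁,λ) ⊕ C_F(A₂,λ); in particular dim C_F(A,λ) = dim C_F(A₁,λ) + dim C_F(A₂,λ). -/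
open Matrix Module

/-!
The equation `A B = λ B A` splits blockwise. Iterating it on the off-diagonal blocks gives
`A₁ʳ B₁₂ = λʳ B₁₂ A₂ʳ` and `A₂ʳ B₂₁ = λʳ B₂₁ A₁ʳ`; choosing `r` with `A₁ʳ = 0` and using that `λ`
and `A₂` are invertible, both blocks vanish. So `(B₁₁, B₂₂) ↦ fromBlocks B₁₁ 0 0 B₂₂` is a linear
bijection `C(A₁, λ) × C(A₂, λ) → C(A, λ)`.
-/

namespace Matrix

variable {m n R : Type*} [Fintype m] [Fintype n] [DecidableEq m] [DecidableEq n]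

theorem pow_mul_eq_smul_mul_pow_of_mul_eq_smul_mul [CommSemiring R] {M : Matrix m m R}
    {N : Matrix n n R} {C : Matrix m n R} {lam : R} (h : M * C = lam • (C * N)) (j : ℕ) :
    M ^ j * C = lam ^ j • (C * N ^ j) := by
  induction j with
  | zero => simp
  | succ j ih =>
    calc M ^ (j + 1) * C = lam • (M ^ j * C * N) := by
          rw [pow_succ, Matrix.mul_assoc, h, Matrix.mul_smul, Matrix.mul_assoc]
      _ = lam ^ (j + 1) • (C * N ^ (j + 1)) := by
          rw [ih, Matrix.smul_mul, smul_smul, Matrix.mul_assoc, ← pow_succ, ← pow_succ']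

theorem eq_zero_of_mul_eq_smul_mul_of_isNilpotent_of_isUnit [CommRing R] {M : Matrix m m R}
    {N : Matrix n n R} {C : Matrix m n R} {lam : R} (hlam : IsUnit lam) (hM : IsNilpotent M)
    (hN : IsUnit N) (h : M * C = lam • (C * N)) : C = 0 := by
  obtain ⟨r, hr⟩ := hM
  have hCN : C * N ^ r = 0 := by
    simpa [hr, (hlam.pow r).smul_eq_zero, eq_comm] using
      pow_mul_eq_smul_mul_pow_of_mul_eq_smul_mul h r
  have hdet : IsUnit (N ^ r).det := (isUnit_iff_isUnit_det _).mp (hN.pow r)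
  rw [← mul_nonsing_inv_cancel_right (N ^ r) C hdet, hCN, Matrix.zero_mul]

theorem eq_zero_of_mul_eq_smul_mul_of_isUnit_of_isNilpotent [CommRing R] {M : Matrix m m R}
    {N : Matrix n n R} {C : Matrix m n R} {lam : R} (hM : IsUnit M) (hN : IsNilpotent N)
    (h : M * C = lam • (C * N)) : C = 0 := by
  obtain ⟨r, hr⟩ := hN
  have hMC : M ^ r * C = 0 := by
    simpa [hr] using pow_mul_eq_smul_mul_pow_of_mul_eq_smul_mul h r
  have hdet : IsUnit (M ^ r).det := (isUnit_iff_isUnit_det _).mp (hM.pow r)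
  rw [← nonsing_inv_mul_cancel_left (M ^ r) C hdet, hMC, Matrix.mul_zero]

end Matrix

section FromBlocks

variable {F m n : Type*} [Field F] [Fintype m] [Fintype n] [DecidableEq m] [DecidableEq n]
  {A₁ : Matrix m m F} {A₂ : Matrix n n F} {lam : F}

theorem mem_twistedCentralizer_iff {A B : Matrix m m F} :
    B ∈ twistedCentralizer A lam ↔ A * B = lam • (B * A) := by
  simp [twistedCentralizer, sub_eq_zero]

theorem fromBlocks_mem_twistedCentralizer_iff {B₁₁ : Matrix m m F} {B₁₂ : Matrix m n F}
    {B₂₁ : Matrix n m F} {B₂₂ : Matrix n n F} :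
    fromBlocks B₁₁ B₁₂ B₂₁ B₂₂ ∈ twistedCentralizer (fromBlocks A₁ 0 0 A₂) lam ↔
      B₁₁ ∈ twistedCentralizer A₁ lam ∧ A₁ * B₁₂ = lam • (B₁₂ * A₂) ∧
        A₂ * B₂₁ = lam • (B₂₁ * A₁) ∧ B₂₂ ∈ twistedCentralizer A₂ lam := by
  simp [mem_twistedCentralizer_iff, fromBlocks_multiply, fromBlocks_smul, fromBlocks_inj]

variable (A₁ A₂ lam) in
noncomputable def twistedCentralizerProdToFromBlocks :
    twistedCentralizer A₁ lam × twistedCentralizer A₂ lam →ₗ[F]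
      twistedCentralizer (fromBlocks A₁ 0 0 A₂) lam where
  toFun B := ⟨fromBlocks B.1 0 0 B.2, fromBlocks_mem_twistedCentralizer_iff.mpr
    ⟨B.1.2, by simp, by simp, B.2.2⟩⟩
  map_add' B B' := by ext1; simp [fromBlocks_add]
  map_smul' c B := by ext1; simp [fromBlocks_smul]

theorem twistedCentralizerProdToFromBlocks_injective :
    Function.Injective (twistedCentralizerProdToFromBlocks A₁ A₂ lam) := by
  intro B B' h
  have := fromBlocks_inj.mp (congrArg Subtype.val h)
  ext1 <;> ext1
  exacts [this.1, this.2.2.2]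

theorem twistedCentralizerProdToFromBlocks_surjective (hlam : lam ≠ 0) (h₁ : IsNilpotent A₁)
    (h₂ : IsUnit A₂) : Function.Surjective (twistedCentralizerProdToFromBlocks A₁ A₂ lam) := by
  rintro ⟨B, hB⟩
  rw [← fromBlocks_toBlocks B, fromBlocks_mem_twistedCentralizer_iff] at hB
  obtain ⟨hB₁₁, hB₁₂, hB₂₁, hB₂₂⟩ := hB
  have h₁₂ := eq_zero_of_mul_eq_smul_mul_of_isNilpotent_of_isUnit hlam.isUnit h₁ h₂ hB₁₂
  have h₂₁ := eq_zero_of_mul_eq_smul_mul_of_isUnit_of_isNilpotent h₂ h₁ hB₂₁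
  refine ⟨(⟨_, hB₁₁⟩, ⟨_, hB₂₂⟩), Subtype.ext ?_⟩
  change fromBlocks _ 0 0 _ = B
  rw [← h₁₂, ← h₂₁, fromBlocks_toBlocks]

end FromBlocks

theorem twistedCentralizer_blockDiag_nilpotent_invertible {F : Type*} [Field F] {m k : ℕ}
    (lam : F) (hlam : lam ≠ 0)
    (A₁ : Matrix (Fin m) (Fin m) F) (A₂ : Matrix (Fin k) (Fin k) F)
    (h1 : IsNilpotent A₁) (h2 : IsUnit A₂) :
    Nonempty ((twistedCentralizer (Matrix.fromBlocks A₁ 0 0 A₂) lam) ≃ₗ[F]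
      (twistedCentralizer A₁ lam × twistedCentralizer A₂ lam)) ∧
    finrank F (twistedCentralizer (Matrix.fromBlocks A₁ 0 0 A₂) lam) =
      finrank F (twistedCentralizer A₁ lam) + finrank F (twistedCentralizer A₂ lam) := by
  let e := (LinearEquiv.ofBijective (twistedCentralizerProdToFromBlocks A₁ A₂ lam)
    ⟨twistedCentralizerProdToFromBlocks_injective,
      twistedCentralizerProdToFromBlocks_surjective hlam h1 h2⟩).symm
  exact ⟨⟨e⟩, e.finrank_eq.trans finrank_prod⟩
end

section
/- Let F be a field, λ ∈ F with λ ≠ 0, and let A ∈ F^{n×n} be the block diagonal matrix ⊕_{i=1}^{k} J_{μ_i} of nilpotent Jordan blocks, where μ = (μ₁, …, μ_k) is a partition of n with μ₁ ≥ μ₂ ≥ ⋯ ≥ μ_k ≥ 1. Then dim C_F(A,λ) = Σ_{i=1}^{μ₁} (μ'_i)², where μ' is the conjugate partition of μ; in particular dim C_F(A,λ) ≥ k², where k = μ'₁ is the nullity of A. -/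
open Matrix Module

/-- The `μ × μ` nilpotent Jordan block, with `1` in positions `(i, i+1)`. -/
def jordanBlock (F : Type*) [Field F] (μ : ℕ) : Matrix (Fin μ) (Fin μ) F :=
  Matrix.of fun i j => if (i : ℕ) + 1 = (j : ℕ) then 1 else 0

/-!
Cut `B` into blocks `B_{pq}` along `A = ⊕ J_{μ_p}`: the equation `AB = λBA` splits into the
independent equations `J_{μ_p} B_{pq} = λ B_{pq} J_{μ_q}`. For `λ ≠ 0` the solutions of
`J_m X = λ X J_n` are the matrices `X_{ij} = λ^i c_{j-i}` with `c_d = 0` for `d < n - m`, a space of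
dimension `min m n`. Hence `dim C(A, λ) = ∑_{p,q} min(μ_p, μ_q)`; counting, for each level `i`, the
pairs `(p, q)` with `i ≤ min(μ_p, μ_q)` turns this into `∑_i (μ'_i)²`, and since every `min` is at
least `1` the sum is at least `k²`.
-/

open Finset

namespace Matrix

lemma ext_submatrix_sigmaMk {α ι : Type*} {m' n' : ι → Type*}
    {X Y : Matrix (Σ i, m' i) (Σ i, n' i) α}
    (h : ∀ p q, X.submatrix (Sigma.mk p) (Sigma.mk q) = Y.submatrix (Sigma.mk p) (Sigma.mk q)) :
    X = Y :=
  ext fun ⟨p, i⟩ ⟨q, j⟩ => congr_fun (congr_fun (h p q) i) j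

variable {α ι κ κ' : Type*} [NonUnitalNonAssocSemiring α] [Fintype ι] [DecidableEq ι]
  {m' n' : ι → Type*}

lemma blockDiagonal'_mul_submatrix_sigmaMk [∀ i, Fintype (n' i)] (A : ∀ i, Matrix (m' i) (n' i) α)
    (X : Matrix (Σ i, n' i) κ α) (p : ι) (f : κ' → κ) :
    (blockDiagonal' A * X).submatrix (Sigma.mk p) f = A p * X.submatrix (Sigma.mk p) f := by
  ext i j
  simp [mul_apply, Fintype.sum_sigma, blockDiagonal'_apply]

lemma mul_blockDiagonal'_submatrix_sigmaMk [∀ i, Fintype (m' i)] (A : ∀ i, Matrix (m' i) (n' i) α)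
    (X : Matrix κ (Σ i, m' i) α) (q : ι) (f : κ' → κ) :
    (X * blockDiagonal' A).submatrix f (Sigma.mk q) = X.submatrix f (Sigma.mk q) * A q := by
  ext i j
  simp [mul_apply, Fintype.sum_sigma, blockDiagonal'_apply]

end Matrix

section Intertwiner

variable {R : Type*} [CommSemiring R] {m n : Type*} [Fintype m] [Fintype n]

def twistedIntertwiner (A : Matrix m m R) (B : Matrix n n R) (lam : R) :
    Submodule R (Matrix m n R) where
  carrier := {X | A * X = lam • (X * B)}
  add_mem' hX hY := by simp_all [Matrix.mul_add, Matrix.add_mul, smul_add]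
  zero_mem' := by simp
  smul_mem' c X hX := by simp_all [Matrix.mul_smul, Matrix.smul_mul, smul_comm c lam]

@[simp]
lemma mem_twistedIntertwiner {A : Matrix m m R} {B : Matrix n n R} {lam : R} {X : Matrix m n R} :
    X ∈ twistedIntertwiner A B lam ↔ A * X = lam • (X * B) :=
  Iff.rfl

end Intertwiner

section Field

variable {F : Type*} [Field F]

lemma twistedCentralizer_eq_twistedIntertwiner {m : Type*} [Fintype m] [DecidableEq m]
    (A : Matrix m m F) (lam : F) : twistedCentralizer A lam = twistedIntertwiner A A lam := by
  ext X
  simp [twistedCentralizer, sub_eq_zero]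

section BlockDiagonal

variable {ι : Type*} [Fintype ι] [DecidableEq ι] {d : ι → Type*} [∀ i, Fintype (d i)]
  [∀ i, DecidableEq (d i)]

lemma mem_twistedCentralizer_blockDiagonal' {A : ∀ i, Matrix (d i) (d i) F} {lam : F}
    {X : Matrix (Σ i, d i) (Σ i, d i) F} :
    X ∈ twistedCentralizer (blockDiagonal' A) lam ↔
      ∀ p q, X.submatrix (Sigma.mk p) (Sigma.mk q) ∈ twistedIntertwiner (A p) (A q) lam := by
  simp only [twistedCentralizer_eq_twistedIntertwiner, mem_twistedIntertwiner]
  refine ⟨fun h p q => ?_, fun h => Matrix.ext_submatrix_sigmaMk fun p q => ?_⟩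
  · rw [← blockDiagonal'_mul_submatrix_sigmaMk, h]
    exact congrArg (lam • ·) (mul_blockDiagonal'_submatrix_sigmaMk A X q _)
  · rw [blockDiagonal'_mul_submatrix_sigmaMk, h]
    exact congrArg (lam • ·) (mul_blockDiagonal'_submatrix_sigmaMk A X q _).symm

def twistedCentralizerBlockDiagonal'Equiv (A : ∀ i, Matrix (d i) (d i) F) (lam : F) :
    twistedCentralizer (blockDiagonal' A) lam ≃ₗ[F] ∀ p q, twistedIntertwiner (A p) (A q) lam where
  toFun X p q := ⟨(X : Matrix _ _ F).submatrix (Sigma.mk p) (Sigma.mk q),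
    mem_twistedCentralizer_blockDiagonal'.mp X.2 p q⟩
  map_add' _ _ := rfl
  map_smul' _ _ := rfl
  invFun Y := ⟨Matrix.of fun (x y : Σ i, d i) => (Y x.1 y.1 : Matrix (d x.1) (d y.1) F) x.2 y.2,
    mem_twistedCentralizer_blockDiagonal'.mpr fun p q => (Y p q).2⟩
  left_inv _ := rfl
  right_inv _ := rfl

lemma finrank_twistedCentralizer_blockDiagonal' (A : ∀ i, Matrix (d i) (d i) F) (lam : F) :
    finrank F (twistedCentralizer (blockDiagonal' A) lam) =
      ∑ p, ∑ q, finrank F (twistedIntertwiner (A p) (A q) lam) := by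
  simp only [(twistedCentralizerBlockDiagonal'Equiv A lam).finrank_eq, finrank_pi_fintype]

end BlockDiagonal

section JordanBlock

variable {ι : Type*} {m n : ℕ}

lemma jordanBlock_mul_apply (X : Matrix (Fin m) ι F) (i : Fin m) (j : ι) :
    (jordanBlock F m * X) i j = if h : (i : ℕ) + 1 < m then X ⟨i + 1, h⟩ j else 0 := by
  split_ifs with h
  · rw [mul_apply, Finset.sum_eq_single (⟨i + 1, h⟩ : Fin m)] <;>
      simp +contextual [jordanBlock, Fin.ext_iff, eq_comm]
  · refine (mul_apply ..).trans (Finset.sum_eq_zero fun l _ => ?_)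
    simp [jordanBlock]
    omega

lemma mul_jordanBlock_apply (X : Matrix ι (Fin n) F) (i : ι) (j : Fin n) :
    (X * jordanBlock F n) i j = if h : 0 < (j : ℕ) then X i ⟨j - 1, by omega⟩ else 0 := by
  split_ifs with h
  · rw [mul_apply, Finset.sum_eq_single (⟨j - 1, by omega⟩ : Fin n)] <;>
      simp +contextual [jordanBlock, Fin.ext_iff]
    all_goals omega
  · refine (mul_apply ..).trans (Finset.sum_eq_zero fun l _ => ?_)
    simp [jordanBlock]
    omega

variable {lam : F} {X : Matrix (Fin m) (Fin n) F}

lemma mem_twistedIntertwiner_jordanBlock :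
    X ∈ twistedIntertwiner (jordanBlock F m) (jordanBlock F n) lam ↔
      ∀ (i : Fin m) (j : Fin n), (if h : (i : ℕ) + 1 < m then X ⟨i + 1, h⟩ j else 0) =
        lam * if h : 0 < (j : ℕ) then X i ⟨j - 1, by omega⟩ else 0 := by
  simp only [mem_twistedIntertwiner, ← Matrix.ext_iff, jordanBlock_mul_apply, Matrix.smul_apply,
    mul_jordanBlock_apply, smul_eq_mul]

lemma apply_eq_of_mem_twistedIntertwiner_jordanBlock
    (hX : X ∈ twistedIntertwiner (jordanBlock F m) (jordanBlock F n) lam)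
    (i j : ℕ) (hi : i < m) (hj : j < n) :
    X ⟨i, hi⟩ ⟨j, hj⟩ = if i ≤ j then lam ^ i * X ⟨0, by omega⟩ ⟨j - i, by omega⟩ else 0 := by
  induction i generalizing j with
  | zero => simp
  | succ i ih =>
    have h := mem_twistedIntertwiner_jordanBlock.mp hX ⟨i, by omega⟩ ⟨j, hj⟩
    simp only [dif_pos hi] at h
    rw [h]
    rcases j with _ | j
    · simp
    · simp only [ih j (by omega) (by omega), Nat.add_sub_add_right, Nat.add_le_add_iff_right,
        Nat.add_sub_cancel, dif_pos (Nat.succ_pos j)]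
      split_ifs <;> ring

lemma apply_zero_eq_zero_of_mem_twistedIntertwiner_jordanBlock (hlam : lam ≠ 0)
    (hX : X ∈ twistedIntertwiner (jordanBlock F m) (jordanBlock F n) lam)
    (hm : 0 < m) (j : ℕ) (hj : j + m < n) : X ⟨0, hm⟩ ⟨j, by omega⟩ = 0 := by
  -- the last row of `J_m X` is zero, and the diagonal through `(0, j)` reaches it inside `X`
  have h := mem_twistedIntertwiner_jordanBlock.mp hX ⟨m - 1, by omega⟩ ⟨j + m, hj⟩
  simp only [dif_neg (show ¬(m - 1 + 1 < m) by omega), dif_pos (show 0 < j + m by omega)] at h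
  rw [apply_eq_of_mem_twistedIntertwiner_jordanBlock hX, if_pos (by omega)] at h
  simpa [hlam, show j + m - 1 - (m - 1) = j by omega] using h.symm

-- `n - m` is truncated subtraction, i.e. `max (n - m) 0`.
def twistedToeplitz (lam : F) (m n : ℕ) : (Fin (min m n) → F) →ₗ[F] Matrix (Fin m) (Fin n) F where
  toFun c := of fun i j =>
    if h : n - m + i ≤ j then lam ^ (i : ℕ) * c ⟨j - i - (n - m), by omega⟩ else 0
  map_add' c d := by
    ext i j
    simp only [of_apply, Matrix.add_apply, Pi.add_apply]
    split_ifs <;> ring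
  map_smul' a c := by
    ext i j
    simp only [of_apply, Matrix.smul_apply, Pi.smul_apply, RingHom.id_apply, smul_eq_mul]
    split_ifs <;> ring

lemma twistedToeplitz_apply_zero (c : Fin (min m n) → F) (t : Fin (min m n)) :
    twistedToeplitz lam m n c ⟨0, by have := t.2; omega⟩ ⟨n - m + t, by omega⟩ = c t := by
  simp [twistedToeplitz]

lemma twistedToeplitz_injective : Function.Injective (twistedToeplitz (F := F) lam m n) := by
  intro c d h
  funext t
  rw [← twistedToeplitz_apply_zero c t, h, twistedToeplitz_apply_zero]

lemma twistedToeplitz_mem (c : Fin (min m n) → F) :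
    twistedToeplitz lam m n c ∈ twistedIntertwiner (jordanBlock F m) (jordanBlock F n) lam := by
  rw [mem_twistedIntertwiner_jordanBlock]
  intro i j
  simp only [twistedToeplitz, LinearMap.coe_mk, AddHom.coe_mk, of_apply]
  split_ifs <;> first | (exfalso; omega) | ring1 | skip
  rw [pow_succ', mul_assoc]
  congr 3
  simp only [Fin.mk.injEq]
  omega

lemma range_twistedToeplitz (hlam : lam ≠ 0) :
    LinearMap.range (twistedToeplitz lam m n) =
      twistedIntertwiner (jordanBlock F m) (jordanBlock F n) lam := by
  refine le_antisymm (LinearMap.range_le_iff_comap.mpr ?_) fun X hX => ?_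
  · exact Submodule.eq_top_iff'.mpr twistedToeplitz_mem
  refine ⟨fun t => X ⟨0, by have := t.2; omega⟩ ⟨n - m + t, by omega⟩, ?_⟩
  ext ⟨i, hi⟩ ⟨j, hj⟩
  rw [apply_eq_of_mem_twistedIntertwiner_jordanBlock hX]
  simp only [twistedToeplitz, LinearMap.coe_mk, AddHom.coe_mk, of_apply]
  split_ifs
  · congr 2
    simp only [Fin.mk.injEq]
    omega
  · omega
  · rw [apply_zero_eq_zero_of_mem_twistedIntertwiner_jordanBlock hlam hX (by omega) _ (by omega),
      mul_zero]
  · rfl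

lemma finrank_twistedIntertwiner_jordanBlock (hlam : lam ≠ 0) :
    finrank F (twistedIntertwiner (jordanBlock F m) (jordanBlock F n) lam) = min m n := by
  rw [← range_twistedToeplitz hlam, LinearMap.finrank_range_of_inj twistedToeplitz_injective,
    finrank_fin_fun]

end JordanBlock

end Field

lemma min_eq_card_filter_Icc {a b M : ℕ} (ha : a ≤ M) :
    min a b = #{i ∈ Icc 1 M | i ≤ a ∧ i ≤ b} := by
  rw [show {i ∈ Icc 1 M | i ≤ a ∧ i ≤ b} = Icc 1 (min a b) by ext; simp; omega, Nat.card_Icc,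
    Nat.add_sub_cancel]

lemma card_filter_le_sq {ι : Type*} [Fintype ι] (μ : ι → ℕ) (i : ℕ) :
    #{j | i ≤ μ j} ^ 2 = ∑ p, ∑ q, if i ≤ μ p ∧ i ≤ μ q then 1 else 0 := by
  simp only [sq, card_filter, sum_mul_sum, ite_zero_mul_ite_zero, mul_one]

lemma sum_sum_min_eq_sum_card_filter_le_sq {ι : Type*} [Fintype ι] (μ : ι → ℕ) {M : ℕ}
    (hM : ∀ i, μ i ≤ M) :
    ∑ p, ∑ q, min (μ p) (μ q) = ∑ i ∈ Icc 1 M, #{j | i ≤ μ j} ^ 2 := by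
  simp only [card_filter_le_sq, min_eq_card_filter_Icc (hM _)]
  simp only [card_filter]
  symm
  rw [sum_comm]
  exact sum_congr rfl fun p _ => sum_comm

theorem dim_twistedCentralizer_jordan_general {F : Type*} [Field F] {k : ℕ} (hk : 0 < k)
    (lam : F) (hlam : lam ≠ 0) (μ : Fin k → ℕ) (hanti : Antitone μ)
    (hpos : ∀ i, 1 ≤ μ i) :
    finrank F (twistedCentralizer
        (Matrix.blockDiagonal' (fun i : Fin k => jordanBlock F (μ i))) lam) =
      ∑ i ∈ Finset.Icc 1 (μ ⟨0, hk⟩),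
        ((Finset.univ.filter fun j : Fin k => i ≤ μ j).card) ^ 2 ∧
    k ^ 2 ≤ finrank F (twistedCentralizer
        (Matrix.blockDiagonal' (fun i : Fin k => jordanBlock F (μ i))) lam) := by
  have hdim : finrank F (twistedCentralizer (blockDiagonal' fun i => jordanBlock F (μ i)) lam) =
      ∑ p, ∑ q, min (μ p) (μ q) := by
    simp only [finrank_twistedCentralizer_blockDiagonal',
      finrank_twistedIntertwiner_jordanBlock hlam]
  refine ⟨hdim.trans (sum_sum_min_eq_sum_card_filter_le_sq μ fun p => hanti (Nat.zero_le p.val)),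
    ?_⟩
  calc k ^ 2 = ∑ _p : Fin k, ∑ _q : Fin k, 1 := by simp [sq]
    _ ≤ ∑ p, ∑ q, min (μ p) (μ q) :=
      sum_le_sum fun p _ => sum_le_sum fun q _ => le_min (hpos p) (hpos q)
    _ = _ := hdim.symm

theorem dim_twistedCentralizer_jordan {F : Type*} [Field F] {n k : ℕ} (hk : 0 < k)
    (lam : F) (hlam : lam ≠ 0) (μ : Fin k → ℕ) (hanti : Antitone μ)
    (hpos : ∀ i, 1 ≤ μ i) (hsum : ∑ i, μ i = n) :
    finrank F (twistedCentralizer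
        (Matrix.blockDiagonal' (fun i : Fin k => jordanBlock F (μ i))) lam) =
      ∑ i ∈ Finset.Icc 1 (μ ⟨0, hk⟩),
        ((Finset.univ.filter fun j : Fin k => i ≤ μ j).card) ^ 2 ∧
    k ^ 2 ≤ finrank F (twistedCentralizer
        (Matrix.blockDiagonal' (fun i : Fin k => jordanBlock F (μ i))) lam) :=
  dim_twistedCentralizer_jordan_general hk lam hlam μ hanti hpos
end

section
/- Let F be a field, λ ∈ F with λ ≠ 0, and let A ∈ F^{n×n} have rank r. Then (n−r)² ≤ dim C_F(A,λ) ≤ (n−r)² + r². -/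
open Matrix Module

/-!
Let `f` be the endomorphism of `V = Fⁿ` given by `A`. Every `g` with `f g = 0 = g f`, i.e. every
map killing `range f` with values in `ker f`, lies in the twisted centralizer; these form a space
of dimension `(n - r)²`. Conversely, for `λ ≠ 0`, `g ↦ g f` sends the twisted centralizer into the
maps killing `ker f` with values in `range f` (dimension `r²`), since `g (f x) = f (λ⁻¹ g x)`; its
kernel consists of maps with `g f = 0`, hence also `f g = λ g f = 0`.
-/

namespace Submodule

section CommRing

variable {R V V₂ : Type*} [CommRing R] [AddCommGroup V] [Module R V] [AddCommGroup V₂]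
  [Module R V₂]

def mapsKillingInto (U : Submodule R V) (W : Submodule R V₂) : Submodule R (V →ₗ[R] V₂) :=
  LinearMap.range (LinearMap.lcomp R V₂ U.mkQ ∘ₗ LinearMap.compRight R W.subtype)

theorem mem_mapsKillingInto {U : Submodule R V} {W : Submodule R V₂} {h : V →ₗ[R] V₂} :
    h ∈ U.mapsKillingInto W ↔ U ≤ LinearMap.ker h ∧ LinearMap.range h ≤ W := by
  constructor
  · rintro ⟨g, rfl⟩
    refine ⟨fun x hx => ?_, ?_⟩
    · simp [(Submodule.Quotient.mk_eq_zero U).2 hx]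
    · rintro _ ⟨x, rfl⟩
      simp
  · rintro ⟨hU, hW⟩
    refine ⟨U.liftQ (h.codRestrict W fun x => hW ⟨x, rfl⟩) fun x hx => ?_, ?_⟩
    · simpa using hU hx
    · ext x
      simp

end CommRing

theorem finrank_mapsKillingInto {K V V₂ : Type*} [Field K] [AddCommGroup V] [Module K V]
    [AddCommGroup V₂] [Module K V₂] [FiniteDimensional K V] [FiniteDimensional K V₂]
    (U : Submodule K V) (W : Submodule K V₂) :
    finrank K (U.mapsKillingInto W) = finrank K (V ⧸ U) * finrank K W := by
  rw [mapsKillingInto, LinearMap.finrank_range_of_inj, finrank_linearMap]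
  exact U.mkQ_surjective.injective_linearMapComp_right.comp
    W.injective_subtype.injective_linearMapComp_left

end Submodule

namespace Algebra

variable (R : Type*) {A B : Type*} [CommRing R] [Ring A] [Ring B] [Algebra R A] [Algebra R B]

def twistedCentralizer (a : A) (μ : R) : Submodule R A :=
  LinearMap.ker (LinearMap.mulLeft R a - μ • LinearMap.mulRight R a)

variable {R}

theorem mem_twistedCentralizer {a b : A} {μ : R} :
    b ∈ twistedCentralizer R a μ ↔ a * b = μ • (b * a) := by
  simp [twistedCentralizer, sub_eq_zero]

theorem map_twistedCentralizer (e : A ≃ₐ[R] B) (a : A) (μ : R) :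
    (twistedCentralizer R a μ).map (e.toLinearEquiv : A →ₗ[R] B) =
      twistedCentralizer R (e a) μ := by
  ext b
  rw [Submodule.mem_map_equiv, mem_twistedCentralizer, mem_twistedCentralizer,
    ← e.injective.eq_iff]
  simp

theorem finrank_twistedCentralizer_algEquiv (e : A ≃ₐ[R] B) (a : A) (μ : R) :
    finrank R (twistedCentralizer R (e a) μ) = finrank R (twistedCentralizer R a μ) := by
  rw [← map_twistedCentralizer, LinearEquiv.finrank_map_eq]

end Algebra

namespace Module.End

open LinearMap Submodule

variable {K V : Type*} [Field K] [AddCommGroup V] [Module K V] {f g : Module.End K V} {μ : K}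

theorem mapsKillingInto_range_ker_le_twistedCentralizer (f : Module.End K V) (μ : K) :
    (range f).mapsKillingInto (ker f) ≤ Algebra.twistedCentralizer K f μ := by
  intro g hg
  obtain ⟨hker, hrange⟩ := mem_mapsKillingInto.1 hg
  have hfg : f * g = 0 := LinearMap.ext fun x => hrange ⟨x, rfl⟩
  have hgf : g * f = 0 := LinearMap.ext fun x => hker ⟨x, rfl⟩
  rw [Algebra.mem_twistedCentralizer, hfg, hgf, smul_zero]

theorem mem_mapsKillingInto_of_mul_eq_zero (hg : g ∈ Algebra.twistedCentralizer K f μ)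
    (hgf : g * f = 0) : g ∈ (range f).mapsKillingInto (ker f) := by
  have hfg : f * g = 0 := by rw [Algebra.mem_twistedCentralizer.1 hg, hgf, smul_zero]
  refine mem_mapsKillingInto.2 ⟨?_, ?_⟩
  · rintro _ ⟨x, rfl⟩
    exact congr($hgf x)
  · rintro _ ⟨x, rfl⟩
    exact congr($hfg x)

theorem mul_mem_mapsKillingInto (hμ : μ ≠ 0) (hg : g ∈ Algebra.twistedCentralizer K f μ) :
    g * f ∈ (ker f).mapsKillingInto (range f) := by
  refine mem_mapsKillingInto.2 ⟨fun x hx => ?_, ?_⟩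
  · rw [mem_ker, mul_apply, mem_ker.1 hx, map_zero]
  · rintro _ ⟨x, rfl⟩
    refine ⟨μ⁻¹ • g x, ?_⟩
    rw [map_smul, ← mul_apply, Algebra.mem_twistedCentralizer.1 hg, LinearMap.smul_apply,
      inv_smul_smul₀ hμ]

theorem finrank_twistedCentralizer_le [FiniteDimensional K V] (hμ : μ ≠ 0)
    (f : Module.End K V) :
    finrank K (Algebra.twistedCentralizer K f μ) ≤
      finrank K ((range f).mapsKillingInto (ker f)) +
        finrank K ((ker f).mapsKillingInto (range f)) := by
  set φ := (mulRight K f).domRestrict (Algebra.twistedCentralizer K f μ)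
  have hrange : finrank K (range φ) ≤ finrank K ((ker f).mapsKillingInto (range f)) := by
    rw [range_domRestrict]
    exact finrank_mono (map_le_iff_le_comap.2 fun g hg => mul_mem_mapsKillingInto hμ hg)
  have hker : finrank K (ker φ) ≤ finrank K ((range f).mapsKillingInto (ker f)) := by
    rw [← finrank_map_subtype_eq]
    refine finrank_mono ?_
    rintro _ ⟨g, hg, rfl⟩
    exact mem_mapsKillingInto_of_mul_eq_zero g.2 hg
  have := finrank_range_add_finrank_ker φ
  omega

theorem finrank_mapsKillingInto_range_ker [FiniteDimensional K V] (f : Module.End K V) :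
    finrank K ((range f).mapsKillingInto (ker f)) = (finrank K V - finrank K (range f)) ^ 2 := by
  have := finrank_range_add_finrank_ker f
  rw [finrank_mapsKillingInto, finrank_quotient, sq]
  congr
  omega

theorem finrank_mapsKillingInto_ker_range [FiniteDimensional K V] (f : Module.End K V) :
    finrank K ((ker f).mapsKillingInto (range f)) = finrank K (range f) ^ 2 := by
  rw [finrank_mapsKillingInto, f.quotKerEquivRange.finrank_eq, sq]

end Module.End

theorem twistedCentralizer_eq_algebra_twistedCentralizer {F m : Type*} [Field F] [Fintype m]
    [DecidableEq m] (A : Matrix m m F) (lam : F) :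
    twistedCentralizer A lam = Algebra.twistedCentralizer F A lam :=
  rfl

theorem dim_twistedCentralizer_rank_bounds {F : Type*} [Field F] {n : ℕ}
    (lam : F) (hlam : lam ≠ 0) (A : Matrix (Fin n) (Fin n) F) (r : ℕ) (hr : A.rank = r) :
    (n - r) ^ 2 ≤ finrank F (twistedCentralizer A lam) ∧
    finrank F (twistedCentralizer A lam) ≤ (n - r) ^ 2 + r ^ 2 := by
  set f := toLinAlgEquiv' A
  have hC : finrank F (twistedCentralizer A lam) =
      finrank F (Algebra.twistedCentralizer F f lam) := by
    rw [twistedCentralizer_eq_algebra_twistedCentralizer,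
      Algebra.finrank_twistedCentralizer_algEquiv]
  have hrank : finrank F (LinearMap.range f) = r := hr
  have hlower := Module.End.finrank_mapsKillingInto_range_ker f
  have hupper := Module.End.finrank_mapsKillingInto_ker_range f
  rw [hrank, finrank_fin_fun] at hlower
  rw [hrank] at hupper
  rw [hC, ← hlower, ← hupper]
  exact ⟨Submodule.finrank_mono
      (Module.End.mapsKillingInto_range_ker_le_twistedCentralizer f lam),
    Module.End.finrank_twistedCentralizer_le hlam f⟩
end

section
/- Let F be a field, λ ∈ F, and A ∈ F^{n×n} whose characteristic polynomial splits over F as c_A(t) = ∏_{j=1}^{n} (t − α_j). Then the matrix H = Aᵀ ⊗ I_n − λ I_n ⊗ A ∈ F^{n²×n²} has characteristic polynomial c_H(t) = ∏_{i=1}^{n} ∏_{j=1}^{n} (t − (α_i − λα_j)). -/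
open Matrix Module Kronecker Polynomial

/-!
Triangularize both `Aᵀ = Q B₁ Q⁻¹` and `A = P B₂ P⁻¹` with `α` on the diagonals; such a
triangularization exists by the usual induction that splits off an eigenvector for `α 0`.
Conjugating by `Q ⊗ P` turns `H` into `B₁ ⊗ 1 - λ (1 ⊗ B₂)`, a Kronecker combination of upper
triangular matrices, which is upper triangular for the lexicographic order on index pairs, with
diagonal entries `α i - λ α j`.
-/

namespace Matrix

section Kronecker

variable {R : Type*} [CommRing R] {m n : Type*}

theorem BlockTriangular.charpoly_of_injective [Fintype n] [DecidableEq n] {α : Type*}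
    [LinearOrder α] {M : Matrix n n R} {b : n → α} (hb : Function.Injective b)
    (h : M.BlockTriangular b) : M.charpoly = ∏ i, (X - C (M i i)) :=
  letI : LinearOrder n := LinearOrder.lift' b hb
  charpoly_of_isUpperTriangular M h

theorem BlockTriangular.kronecker {α β : Type*} [Preorder α] [LT β] {M : Matrix m m R}
    {N : Matrix n n R} {b : m → α} {c : n → β} (hM : M.BlockTriangular b)
    (hN : N.BlockTriangular c) :
    (M ⊗ₖ N).BlockTriangular fun p => toLex (b p.1, c p.2) := by
  rintro ⟨i₁, i₂⟩ ⟨j₁, j₂⟩ hlt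
  rcases Prod.Lex.toLex_lt_toLex.1 hlt with h₁ | ⟨-, h₂⟩
  · simp [hM h₁]
  · simp [hN h₂]

theorem charpoly_kronecker_one_sub_smul_one_kronecker [Fintype n] [DecidableEq n] [LinearOrder n]
    {B₁ B₂ : Matrix n n R} (h₁ : B₁.IsUpperTriangular) (h₂ : B₂.IsUpperTriangular) (c : R) :
    (B₁ ⊗ₖ (1 : Matrix n n R) - c • ((1 : Matrix n n R) ⊗ₖ B₂)).charpoly =
      ∏ i, ∏ j, (X - C (B₁ i i - c * B₂ j j)) := by
  have hlex : (B₁ ⊗ₖ (1 : Matrix n n R) - c • ((1 : Matrix n n R) ⊗ₖ B₂)).BlockTriangular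
      fun p => toLex (id p.1, id p.2) :=
    (h₁.kronecker blockTriangular_one).sub fun i j h => by
      rw [smul_apply, (blockTriangular_one.kronecker h₂) h, smul_zero]
  rw [hlex.charpoly_of_injective (fun p q h => by simpa using h), ← Finset.univ_product_univ,
    Finset.prod_product]
  simp

theorem charpoly_kronecker_one_sub_smul_one_kronecker_units_conj [Fintype n] [DecidableEq n]
    (P Q : (Matrix n n R)ˣ) (B₁ B₂ : Matrix n n R) (c : R) :
    ((P * B₁ * P⁻¹ : Matrix n n R) ⊗ₖ (1 : Matrix n n R) -
        c • ((1 : Matrix n n R) ⊗ₖ (Q * B₂ * Q⁻¹ : Matrix n n R))).charpoly =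
      (B₁ ⊗ₖ (1 : Matrix n n R) - c • ((1 : Matrix n n R) ⊗ₖ B₂)).charpoly := by
  let U : (Matrix (n × n) (n × n) R)ˣ :=
    ⟨P ⊗ₖ Q, P⁻¹.val ⊗ₖ Q⁻¹.val, by simp [← mul_kronecker_mul], by simp [← mul_kronecker_mul]⟩
  have hconj : (P * B₁ * P⁻¹ : Matrix n n R) ⊗ₖ (1 : Matrix n n R) -
        c • ((1 : Matrix n n R) ⊗ₖ (Q * B₂ * Q⁻¹ : Matrix n n R)) =
      (U * (B₁ ⊗ₖ (1 : Matrix n n R) - c • ((1 : Matrix n n R) ⊗ₖ B₂)) * U⁻¹ :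
        Matrix (n × n) (n × n) R) := by
    simp [U, Matrix.mul_sub, Matrix.sub_mul, ← mul_kronecker_mul]
  rw [hconj, charpoly_mul_comm, ← mul_assoc, Units.inv_mul, one_mul]

end Kronecker

section Triangularize

variable {R K : Type*} [CommRing R] [Field K] {n : Type*} [Fintype n] [DecidableEq n] {m : ℕ}

theorem exists_mulVec_eq_smul_of_isRoot_charpoly {A : Matrix n n K} {μ : K}
    (h : A.charpoly.IsRoot μ) : ∃ v ≠ 0, A *ᵥ v = μ • v := by
  rw [IsRoot.def, eval_charpoly, ← exists_mulVec_eq_zero_iff] at h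
  obtain ⟨v, hv, hAv⟩ := h
  refine ⟨v, hv, ?_⟩
  rw [sub_mulVec, scalar_apply, ← smul_one_eq_diagonal, smul_mulVec, one_mulVec,
    sub_eq_zero] at hAv
  exact hAv.symm

theorem exists_units_mulVec_single_eq (i₀ : n) {v : n → K} (hv : v ≠ 0) :
    ∃ P : (Matrix n n K)ˣ, (P : Matrix n n K) *ᵥ Pi.single i₀ 1 = v := by
  obtain ⟨k, hk⟩ := Function.ne_iff.1 hv
  let P := ((1 : Matrix n n K).updateCol k v).submatrix id (Equiv.swap i₀ k)
  have hdet : IsUnit P.det := by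
    rw [det_permute', ← cramer_apply, cramer_one]
    rcases Int.units_eq_one_or (Equiv.Perm.sign (Equiv.swap i₀ k)) with h | h <;>
      simpa [h] using hk
  refine ⟨((isUnit_iff_isUnit_det P).2 hdet).unit, ?_⟩
  ext i
  simp [P]

theorem charmatrix_submatrix {ι : Type*} [Fintype ι] [DecidableEq ι] (M : Matrix n n R)
    {f : ι → n} (hf : Function.Injective f) :
    (charmatrix M).submatrix f f = charmatrix (M.submatrix f f) := by
  ext i j
  simp [charmatrix_apply, diagonal_apply, hf.eq_iff]

theorem apply_zero_of_mulVec_single_zero {M : Matrix (Fin (m + 1)) (Fin (m + 1)) R} {μ : R}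
    (h : M *ᵥ Pi.single 0 1 = Pi.single 0 μ) (i : Fin (m + 1)) :
    M i 0 = (Pi.single 0 μ : Fin (m + 1) → R) i := by
  simpa [mulVec_single_one] using congrFun h i

theorem charpoly_eq_X_sub_C_mul_charpoly_submatrix_succ
    {M : Matrix (Fin (m + 1)) (Fin (m + 1)) R} {μ : R}
    (h : M *ᵥ Pi.single 0 1 = Pi.single 0 μ) :
    M.charpoly = (X - C μ) * (M.submatrix Fin.succ Fin.succ).charpoly := by
  have hcol := apply_zero_of_mulVec_single_zero h
  rw [charpoly, det_succ_column_zero, Fin.sum_univ_succ, charpoly,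
    ← charmatrix_submatrix M (Fin.succ_injective _)]
  simp [hcol]

theorem isUpperTriangular_of_mulVec_single_zero {M : Matrix (Fin (m + 1)) (Fin (m + 1)) R}
    {μ : R} (h : M *ᵥ Pi.single 0 1 = Pi.single 0 μ)
    (hsub : (M.submatrix Fin.succ Fin.succ).IsUpperTriangular) : M.IsUpperTriangular := by
  intro i j hji
  induction i using Fin.cases with
  | zero => exact absurd hji (Fin.not_lt_zero _)
  | succ i =>
    induction j using Fin.cases with
    | zero => simp [apply_zero_of_mulVec_single_zero h]
    | succ j => exact hsub (Fin.succ_lt_succ_iff.1 hji)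

/-- The block-diagonal matrix `diag(1, Q)`. -/
def extendByOne : Matrix (Fin m) (Fin m) R →* Matrix (Fin (m + 1)) (Fin (m + 1)) R where
  toFun Q := of (Fin.cons (Pi.single 0 1) fun i => Fin.cons 0 (Q i))
  map_one' := by
    ext i j
    cases i using Fin.cases <;> cases j using Fin.cases <;>
      simp [one_apply, Fin.succ_ne_zero, eq_comm]
  map_mul' Q₁ Q₂ := by
    ext i j
    cases i using Fin.cases <;> cases j using Fin.cases <;> simp [mul_apply, Fin.sum_univ_succ]

theorem extendByOne_mulVec_single_zero (Q : Matrix (Fin m) (Fin m) R) (x : R) :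
    extendByOne Q *ᵥ Pi.single 0 x = Pi.single 0 x := by
  ext i
  cases i using Fin.cases <;> simp [extendByOne]

theorem submatrix_succ_extendByOne_mul_mul_extendByOne (Q₁ Q₂ : Matrix (Fin m) (Fin m) R)
    (M : Matrix (Fin (m + 1)) (Fin (m + 1)) R) :
    (extendByOne Q₁ * M * extendByOne Q₂).submatrix Fin.succ Fin.succ =
      Q₁ * M.submatrix Fin.succ Fin.succ * Q₂ := by
  ext i j
  simp [extendByOne, mul_apply, Fin.sum_univ_succ]

theorem exists_units_conj_isUpperTriangular_of_charpoly_eq_prod :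
    ∀ {n : ℕ} (A : Matrix (Fin n) (Fin n) K) (α : Fin n → K),
      A.charpoly = ∏ j, (X - C (α j)) →
      ∃ (P : (Matrix (Fin n) (Fin n) K)ˣ) (B : Matrix (Fin n) (Fin n) K),
        B.IsUpperTriangular ∧ (∀ i, B i i = α i) ∧ A = P * B * P⁻¹
  | 0, A, _, _ => ⟨1, A, fun i => i.elim0, fun i => i.elim0, by simp⟩
  | m + 1, A, α, hA => by
    obtain ⟨v, hv, hAv⟩ := exists_mulVec_eq_smul_of_isRoot_charpoly (A := A) (μ := α 0)
      (by rw [hA, IsRoot, eval_prod]; exact Finset.prod_eq_zero (Finset.mem_univ 0) (by simp))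
    obtain ⟨P, hP⟩ := exists_units_mulVec_single_eq 0 hv
    set M : Matrix (Fin (m + 1)) (Fin (m + 1)) K := P⁻¹ * A * P with hM
    have hMcol : M *ᵥ Pi.single 0 1 = Pi.single 0 (α 0) := by
      rw [hM, ← mulVec_mulVec, ← mulVec_mulVec, hP, hAv, mulVec_smul, ← hP, mulVec_mulVec,
        Units.inv_mul, one_mulVec, ← Pi.single_smul', smul_eq_mul, mul_one]
    have hMsub : (M.submatrix Fin.succ Fin.succ).charpoly = ∏ j : Fin m, (X - C (α j.succ)) := by
      refine mul_left_cancel₀ (X_sub_C_ne_zero (α 0)) ?_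
      rw [← charpoly_eq_X_sub_C_mul_charpoly_submatrix_succ hMcol, hM, coe_units_inv,
        charpoly_units_conj', hA, Fin.prod_univ_succ]
    obtain ⟨Q, B, hB, hBα, hQ⟩ := exists_units_conj_isUpperTriangular_of_charpoly_eq_prod _ _ hMsub
    let E := Units.map extendByOne Q
    have hcol : (E⁻¹ * M * E : Matrix (Fin (m + 1)) (Fin (m + 1)) K) *ᵥ Pi.single 0 1 =
        Pi.single 0 (α 0) := by
      rw [← mulVec_mulVec, ← mulVec_mulVec, Units.coe_map, extendByOne_mulVec_single_zero,
        hMcol, Units.coe_map_inv, extendByOne_mulVec_single_zero]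
    have hsub :
        (E⁻¹ * M * E : Matrix (Fin (m + 1)) (Fin (m + 1)) K).submatrix Fin.succ Fin.succ = B := by
      rw [Units.coe_map, Units.coe_map_inv, submatrix_succ_extendByOne_mul_mul_extendByOne, hQ]
      simp [mul_assoc]
    refine ⟨P * E, E⁻¹ * M * E, isUpperTriangular_of_mulVec_single_zero hcol (hsub ▸ hB), ?_, ?_⟩
    · intro i
      cases i using Fin.cases with
      | zero => simpa using apply_zero_of_mulVec_single_zero hcol 0
      | succ i => simpa [← hsub] using hBα i
    · simp [hM, mul_assoc]

end Triangularize

end Matrix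

theorem charpoly_parityCheck {F : Type*} [Field F] {n : ℕ}
    (lam : F) (A : Matrix (Fin n) (Fin n) F) (α : Fin n → F)
    (h : A.charpoly = ∏ j, (X - C (α j))) :
    (Aᵀ ⊗ₖ (1 : Matrix (Fin n) (Fin n) F) -
        lam • ((1 : Matrix (Fin n) (Fin n) F) ⊗ₖ A)).charpoly =
      ∏ i, ∏ j, (X - C (α i - lam * α j)) := by
  obtain ⟨P, B₂, hB₂, hB₂α, rfl⟩ := exists_units_conj_isUpperTriangular_of_charpoly_eq_prod A α h
  obtain ⟨Q, B₁, hB₁, hB₁α, hQ⟩ := exists_units_conj_isUpperTriangular_of_charpoly_eq_prod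
    (P * B₂ * P⁻¹ : Matrix (Fin n) (Fin n) F)ᵀ α (by rwa [charpoly_transpose])
  rw [hQ, charpoly_kronecker_one_sub_smul_one_kronecker_units_conj,
    charpoly_kronecker_one_sub_smul_one_kronecker hB₁ hB₂]
  simp [hB₁α, hB₂α]
end

section
/- Let F be a field and A ∈ F^{n×n}. Then dim C_F(A,1) ≥ deg(m_A(t)), where m_A(t) is the minimal polynomial of A; moreover equality holds if and only if A is cyclic (i.e. c_A(t) = m_A(t)). -/
/-!
The powers `1, A, …, A^(d-1)` with `d = deg m_A` are linearly independent and commute with `A`.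
By the structure theorem over the PID `F[X]`, `Fⁿ` with `X` acting as `A` is isomorphic to the
commutative ring `T = ∏ F[X]/(pᵢ^eᵢ)`, with `A` acting as multiplication by `X`; multiplications by
elements of `T` thus form an `n`-dimensional commutative algebra of matrices containing `A`, so
`dim C(A) ≥ n ≥ d`, and equality forces `d = n`, i.e. `m_A = c_A`. Conversely, if `d = n`, a vector
`v` whose annihilator in `F[X]` is `(m_A)` is cyclic, and `B ↦ B v` is injective on `C(A)`.
-/

open Matrix Module Polynomial

theorem Subalgebra.map_centralizer_singleton {F A B : Type*} [CommSemiring F] [Semiring A]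
    [Semiring B] [Algebra F A] [Algebra F B] (e : A ≃ₐ[F] B) (a : A) :
    (centralizer F {a}).map (e : A →ₐ[F] B) = centralizer F {e a} := by
  ext b
  constructor
  · rintro ⟨c, hc, rfl⟩ _ rfl
    simpa using congrArg e (hc a rfl)
  · intro hb
    refine ⟨e.symm b, fun _ ha => ?_, e.apply_symm_apply b⟩
    rw [Set.mem_singleton_iff.mp ha]
    apply e.injective
    simpa using hb (e a) rfl

theorem natDegree_minpoly_le_finrank_centralizer {F A : Type*} [Field F] [Ring A] [Algebra F A]
    [FiniteDimensional F A] (a : A) :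
    (minpoly F a).natDegree ≤ finrank F (Subalgebra.centralizer F {a}) := by
  have hpow : LinearIndependent F fun i : Fin (minpoly F a).natDegree =>
      (⟨a ^ (i : ℕ), by simp [Subalgebra.mem_centralizer_iff, ← pow_succ, ← pow_succ']⟩ :
        Subalgebra.centralizer F {a}) :=
    .of_comp (Subalgebra.centralizer F {a}).val.toLinearMap (linearIndependent_pow a)
  simpa using hpow.fintype_card_le_finrank

section Endomorphism

variable {F M : Type*} [Field F] [AddCommGroup M] [Module F M] [FiniteDimensional F M]

theorem finrank_le_finrank_centralizer_of_linearEquiv {T : Type*} [CommRing T] [Algebra F T]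
    {φ : Module.End F M} (e : M ≃ₗ[F] T) (t : T) (he : ∀ m, e (φ m) = t * e m) :
    finrank F M ≤ finrank F (Subalgebra.centralizer F {φ}) := by
  let mulConj : T →ₐ[F] Module.End F M :=
    (e.symm.conjAlgEquiv F).toAlgHom.comp (Algebra.lmul F T)
  have hφ : mulConj t = φ := by
    ext m
    simp [mulConj, LinearEquiv.conjAlgEquiv_apply, ← he]
  have hinj : Function.Injective mulConj :=
    (e.symm.conjAlgEquiv F).injective.comp Algebra.lmul_injective
  have hrange : mulConj.range ≤ Subalgebra.centralizer F {φ} := by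
    rintro _ ⟨s, rfl⟩ _ hψ
    rw [Set.mem_singleton_iff.mp hψ, ← hφ]
    exact ((Commute.all t s).map mulConj).eq
  calc finrank F M = finrank F T := e.finrank_eq
    _ = finrank F mulConj.range := (AlgEquiv.ofInjective mulConj hinj).toLinearEquiv.finrank_eq
    _ ≤ finrank F (Subalgebra.centralizer F {φ}) :=
      Submodule.finrank_mono (Subalgebra.toSubmodule.monotone hrange)

theorem finrank_le_finrank_centralizer (φ : Module.End F M) :
    finrank F M ≤ finrank F (Subalgebra.centralizer F {φ}) := by
  obtain ⟨ι, _, p, -, k, ⟨g⟩⟩ := Module.equiv_directSum_of_isTorsion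
    (Module.AEval.isTorsion_of_finiteDimensional F M φ)
  let T := Π i, F[X] ⧸ Ideal.span {p i ^ k i}
  let e : M ≃ₗ[F] T := (AEval'.of φ).trans
    ((g.trans (DirectSum.linearEquivFunOnFintype F[X] ι _)).restrictScalars F)
  refine finrank_le_finrank_centralizer_of_linearEquiv e (algebraMap F[X] T X) fun m => ?_
  simp only [e, ← Algebra.smul_def, LinearEquiv.trans_apply, LinearEquiv.restrictScalars_apply,
    ← AEval'.X_smul_of, map_smul]

theorem finrank_centralizer_le_of_surjective_aeval_apply {φ : Module.End F M} {v : M}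
    (hv : Function.Surjective fun f : F[X] => aeval φ f v) :
    finrank F (Subalgebra.centralizer F {φ}) ≤ finrank F M := by
  let evalAt : Subalgebra.centralizer F {φ} →ₗ[F] M :=
    LinearMap.applyₗ v ∘ₗ (Subalgebra.centralizer F {φ}).val.toLinearMap
  refine LinearMap.finrank_le_finrank_of_injective (f := evalAt) ?_
  rw [← LinearMap.ker_eq_bot, Submodule.eq_bot_iff]
  rintro ⟨ψ, hψ⟩ hψv
  replace hψv : ψ v = 0 := hψv
  ext m
  obtain ⟨f, rfl⟩ := hv m
  have hcomm : Commute ψ (aeval φ f) :=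
    Algebra.commute_of_mem_adjoin_singleton_of_commute (aeval_mem_adjoin_singleton F φ)
      (hψ φ rfl).symm
  change (ψ * aeval φ f) v = 0
  rw [hcomm.eq, Module.End.mul_apply, hψv, map_zero]

theorem exists_surjective_aeval_apply_of_natDegree_minpoly_eq (φ : Module.End F M)
    (h : (minpoly F φ).natDegree = finrank F M) :
    ∃ v : M, Function.Surjective fun f : F[X] => aeval φ f v := by
  obtain ⟨x, hx⟩ := exists_ker_toSpanSingleton_eq_annihilator F[X] (AEval' φ)
  set v := (AEval'.of φ).symm x
  have hdvd : ∀ f : F[X], aeval φ f v = 0 → minpoly F φ ∣ f := fun f hf => by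
    rw [← Ideal.mem_span_singleton, span_minpoly_eq_annihilator, ← hx, LinearMap.mem_ker,
      LinearMap.toSpanSingleton_apply, ← (AEval'.of φ).symm.map_eq_zero_iff]
    simpa using hf
  let evalLT : degreeLT F (minpoly F φ).natDegree →ₗ[F] M :=
    LinearMap.applyₗ v ∘ₗ (aeval φ).toLinearMap ∘ₗ (degreeLT F _).subtype
  have hinj : Function.Injective evalLT := by
    rw [← LinearMap.ker_eq_bot, Submodule.eq_bot_iff]
    rintro ⟨f, hf⟩ hfv
    ext1
    refine eq_zero_of_dvd_of_degree_lt (hdvd f hfv) ((mem_degreeLT.mp hf).trans_eq ?_)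
    exact (degree_eq_natDegree (minpoly.ne_zero (Algebra.IsIntegral.isIntegral φ))).symm
  have hsurj : Function.Surjective evalLT :=
    (LinearMap.injective_iff_surjective_of_finrank_eq_finrank (by
      rw [(degreeLTEquiv F _).finrank_eq, finrank_fin_fun, h])).mp hinj
  refine ⟨v, fun m => ?_⟩
  obtain ⟨⟨f, _⟩, hf⟩ := hsurj m
  exact ⟨f, hf⟩

end Endomorphism

section Matrix

variable {F m : Type*} [Field F] [Fintype m] [DecidableEq m]

theorem twistedCentralizer_one (A : Matrix m m F) :
    twistedCentralizer A 1 = Subalgebra.toSubmodule (Subalgebra.centralizer F {A}) := by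
  ext B
  simp [twistedCentralizer, Subalgebra.mem_centralizer_iff, sub_eq_zero]

theorem finrank_twistedCentralizer_one (A : Matrix m m F) :
    finrank F (twistedCentralizer A 1) = finrank F (Subalgebra.centralizer F {toLin' A}) := by
  change _ = finrank F (Subalgebra.centralizer F {toLinAlgEquiv' A})
  rw [twistedCentralizer_one, ← Subalgebra.map_centralizer_singleton]
  exact ((toLinAlgEquiv' : Matrix m m F ≃ₐ[F] _).subalgebraMap _).toLinearEquiv.finrank_eq

theorem Matrix.charpoly_eq_minpoly_iff (A : Matrix m m F) :
    A.charpoly = minpoly F A ↔ (minpoly F A).natDegree = Fintype.card m := by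
  refine ⟨fun h => h ▸ A.charpoly_natDegree_eq_dim, fun h => ?_⟩
  exact eq_of_monic_of_dvd_of_natDegree_le (minpoly.monic (Algebra.IsIntegral.isIntegral A))
    A.charpoly_monic A.minpoly_dvd_charpoly (by rw [h, A.charpoly_natDegree_eq_dim])

end Matrix

theorem dim_centralizer_ge_deg_minpoly {F : Type*} [Field F] {n : ℕ}
    (A : Matrix (Fin n) (Fin n) F) :
    (minpoly F A).natDegree ≤ finrank F (twistedCentralizer A 1) ∧
    (finrank F (twistedCentralizer A 1) = (minpoly F A).natDegree ↔
      A.charpoly = minpoly F A) := by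
  have hmin : minpoly F (toLin' A) = minpoly F A := minpoly_toLin' A
  have hdeg_le : (minpoly F A).natDegree ≤ finrank F (twistedCentralizer A 1) := by
    rw [finrank_twistedCentralizer_one, ← hmin]
    exact natDegree_minpoly_le_finrank_centralizer _
  have hn_le : n ≤ finrank F (twistedCentralizer A 1) := by
    rw [finrank_twistedCentralizer_one]
    simpa using finrank_le_finrank_centralizer (toLin' A)
  have hdeg_le_n : (minpoly F A).natDegree ≤ n := by
    simpa using natDegree_le_of_dvd A.minpoly_dvd_charpoly A.charpoly_monic.ne_zero
  rw [charpoly_eq_minpoly_iff, Fintype.card_fin]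
  refine ⟨hdeg_le, fun h => le_antisymm hdeg_le_n (hn_le.trans h.le), fun h => ?_⟩
  obtain ⟨v, hv⟩ := exists_surjective_aeval_apply_of_natDegree_minpoly_eq (toLin' A)
    (by rw [hmin, h, finrank_fin_fun])
  refine le_antisymm ?_ hdeg_le
  simpa [finrank_twistedCentralizer_one, h] using
    finrank_centralizer_le_of_surjective_aeval_apply hv
end

section
/- Let 1 ≤ s ≤ r be integers and let σ : {1,…,s} → {1,…,r} be an injective map with no fixed points (σ(i) ≠ i for all i). Then there exists a subset Z ⊆ {1,…,r} with |Z| ∈ {r−1, r} such that {1,…,s} ⊆ Z and σ({1,…,s}) ⊆ Z, and a bijection τ : Z → Z with no fixed points satisfying τ(i) = σ(i) for all 1 ≤ i ≤ s. -/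
/-!
Let A = {1,…,s}, R = {1,…,r} and B = σ(A). Take τ = σ on A and let τ map U = R \ A onto
V = R \ B, two sets of the same size, bijectively and without fixed points. Such a map exists
unless U = V is a singleton: compose a bijection U → V fixing U ∩ V pointwise with a cyclic
permutation of U, which moves every point once U has two elements. In the exceptional case σ
already permutes A, and Z = A, τ = σ works.
-/

open Finset

theorem Set.BijOn.piecewise_union {α β : Type*} {s s' : Set α} {t t' : Set β} {f g : α → β}
    [∀ x, Decidable (x ∈ s)] (hf : BijOn f s t) (hg : BijOn g s' t')
    (hs : Disjoint s s') (ht : Disjoint t t') :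
    BijOn (s.piecewise f g) (s ∪ s') (t ∪ t') := by
  have hf' : BijOn (s.piecewise f g) s t := hf.congr (piecewise_eqOn s f g).symm
  have hg' : BijOn (s.piecewise f g) s' t' :=
    hg.congr fun x hx => (piecewise_eq_of_notMem s f g (hs.notMem_of_mem_right hx)).symm
  refine hf'.union hg' ((injOn_union hs).2 ⟨hf'.injOn, hg'.injOn, ?_⟩)
  exact fun x hx y hy => ht.ne_of_mem (hf'.mapsTo hx) (hg'.mapsTo hy)

namespace Finset

variable {α : Type*}

theorem exists_bijOn_of_card_eq {s t : Finset α} (h : #s = #t) :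
    ∃ f : α → α, Set.BijOn f s t := by
  obtain rfl | ⟨a, -⟩ := s.eq_empty_or_nonempty
  · rw [card_empty, eq_comm, card_eq_zero] at h
    exact ⟨id, by simp [h]⟩
  · have : Nonempty α := ⟨a⟩
    exact s.finite_toSet.exists_bijOn_of_encard_eq (by simp [h])

variable [DecidableEq α]

theorem exists_bijOn_eqOn_id_inter {U V : Finset α} (h : #U = #V) :
    ∃ f : α → α, Set.BijOn f U V ∧ Set.EqOn f id ↑(U ∩ V) := by
  obtain ⟨g, hg⟩ := exists_bijOn_of_card_eq (card_sdiff_comm h)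
  refine ⟨(↑(U ∩ V) : Set α).piecewise id g, ?_, Set.piecewise_eqOn _ _ _⟩
  have := (Set.bijOn_id (↑(U ∩ V) : Set α)).piecewise_union hg
    (disjoint_coe.2 (disjoint_sdiff_inter U V).symm)
    (disjoint_coe.2 (by simpa [inter_comm] using (disjoint_sdiff_inter V U).symm))
  have hU : U ∩ V ∪ U \ V = U := by rw [union_comm, sdiff_union_inter]
  have hV : U ∩ V ∪ V \ U = V := by rw [union_comm, inter_comm, sdiff_union_inter]
  rwa [← coe_union, ← coe_union, hU, hV] at this

theorem exists_bijOn_forall_apply_ne {U V : Finset α} (h : #U = #V)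
    (hUV : ¬(U = V ∧ #U = 1)) : ∃ g : α → α, Set.BijOn g U V ∧ ∀ u ∈ U, g u ≠ u := by
  obtain ⟨f, hf, hf_id⟩ := exists_bijOn_eqOn_id_inter h
  obtain ⟨c, hc, -⟩ := U.countable_toSet.exists_cycleOn
  have hc_ne : ∀ u ∈ U ∩ V, c u ≠ u := by
    intro u hu
    rw [mem_inter] at hu
    refine hc.apply_ne ?_ hu.1
    -- otherwise `U = V = {u}`
    by_contra hU
    have hU1 : #U = 1 := by
      have := card_pos.2 ⟨u, hu.1⟩
      have := one_lt_card_iff_nontrivial.not.2 hU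
      omega
    have hUsub : U ⊆ V := by
      rw [card_eq_one] at hU1
      obtain ⟨a, rfl⟩ := hU1
      simpa [mem_singleton.1 hu.1] using hu.2
    exact hUV ⟨eq_of_subset_of_card_le hUsub h.ge, hU1⟩
  refine ⟨f ∘ c, hf.comp hc.1, fun u hu hfix => ?_⟩
  by_cases huV : u ∈ V
  · have hu' : u ∈ U ∩ V := mem_inter.2 ⟨hu, huV⟩
    exact hc_ne u hu' (hf.injOn (hc.1.mapsTo hu) hu (hfix.trans (hf_id hu').symm))
  · exact huV (hfix ▸ hf.mapsTo (hc.1.mapsTo hu))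

theorem exists_derangement_extending {R A : Finset α} {σ : α → α} (hAR : A ⊆ R)
    (hinj : Set.InjOn σ A) (hmaps : Set.MapsTo σ A R) (hfix : ∀ a ∈ A, σ a ≠ a) :
    ∃ Z ⊆ R, A ⊆ Z ∧ (#Z = #R - 1 ∨ #Z = #R) ∧
      ∃ τ : α → α, Set.BijOn τ Z Z ∧ (∀ z ∈ Z, τ z ≠ z) ∧ Set.EqOn τ σ A := by
  set B := A.image σ
  have hσ : Set.BijOn σ A B := by rw [coe_image]; exact hinj.bijOn_image
  have hBR : B ⊆ R := image_subset_iff.2 fun a ha => hmaps ha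
  have hcard : #(R \ A) = #(R \ B) := by
    rw [card_sdiff_of_subset hAR, card_sdiff_of_subset hBR, card_image_of_injOn hinj]
  by_cases hdeg : R \ A = R \ B ∧ #(R \ A) = 1
  · have hBA : B = A := by
      rw [← sdiff_sdiff_eq_self hAR, hdeg.1, sdiff_sdiff_eq_self hBR]
    refine ⟨A, hAR, subset_rfl, Or.inl ?_, σ, hBA ▸ hσ, hfix, Set.eqOn_refl _ _⟩
    have := card_sdiff_of_subset hAR
    omega
  · obtain ⟨g, hg, hg_fix⟩ := exists_bijOn_forall_apply_ne hcard hdeg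
    refine ⟨R, subset_rfl, hAR, Or.inr rfl, (A : Set α).piecewise σ g, ?_, ?_,
      Set.piecewise_eqOn _ _ _⟩
    · have := hσ.piecewise_union hg (disjoint_coe.2 disjoint_sdiff)
        (disjoint_coe.2 disjoint_sdiff)
      rwa [← coe_union, ← coe_union, union_sdiff_of_subset hAR,
        union_sdiff_of_subset hBR] at this
    · intro z hz
      by_cases hzA : z ∈ A
      · simpa [hzA] using hfix z hzA
      · simpa [hzA] using hg_fix z (mem_sdiff.2 ⟨hz, hzA⟩)

end Finset

theorem extend_fixedPointFree_injection_to_derangement_general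
    (s r : ℕ) (hsr : s ≤ r) (σ : ℕ → ℕ)
    (hinj : Set.InjOn σ (Set.Icc 1 s))
    (hmaps : ∀ i ∈ Finset.Icc 1 s, σ i ∈ Finset.Icc 1 r)
    (hfpf : ∀ i ∈ Finset.Icc 1 s, σ i ≠ i) :
    ∃ Z : Finset ℕ, Z ⊆ Finset.Icc 1 r ∧ (Z.card = r - 1 ∨ Z.card = r) ∧
      (∀ i ∈ Finset.Icc 1 s, i ∈ Z ∧ σ i ∈ Z) ∧
      ∃ τ : ℕ → ℕ, Set.BijOn τ Z Z ∧ (∀ z ∈ Z, τ z ≠ z) ∧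
        ∀ i ∈ Finset.Icc 1 s, τ i = σ i := by
  obtain ⟨Z, hZR, hAZ, hcard, τ, hτ, hτ_fix, hτσ⟩ :=
    exists_derangement_extending (Icc_subset_Icc_right hsr) (by rwa [coe_Icc])
      (fun i hi => hmaps i hi) hfpf
  rw [Nat.card_Icc, add_tsub_cancel_right] at hcard
  exact ⟨Z, hZR, hcard, fun i hi => ⟨hAZ hi, hτσ hi ▸ hτ.mapsTo (hAZ hi)⟩,
    τ, hτ, hτ_fix, fun i hi => hτσ hi⟩

theorem extend_fixedPointFree_injection_to_derangement
    (s r : ℕ) (hs : 1 ≤ s) (hsr : s ≤ r) (σ : ℕ → ℕ)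
    (hinj : Set.InjOn σ (Set.Icc 1 s))
    (hmaps : ∀ i ∈ Finset.Icc 1 s, σ i ∈ Finset.Icc 1 r)
    (hfpf : ∀ i ∈ Finset.Icc 1 s, σ i ≠ i) :
    ∃ Z : Finset ℕ, Z ⊆ Finset.Icc 1 r ∧ (Z.card = r - 1 ∨ Z.card = r) ∧
      (∀ i ∈ Finset.Icc 1 s, i ∈ Z ∧ σ i ∈ Z) ∧
      ∃ τ : ℕ → ℕ, Set.BijOn τ Z Z ∧ (∀ z ∈ Z, τ z ≠ z) ∧
        ∀ i ∈ Finset.Icc 1 s, τ i = σ i :=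
  extend_fixedPointFree_injection_to_derangement_general s r hsr σ hinj hmaps hfpf
end

section
/- Let F be a field, λ ∈ F, and let A ∈ F^{n×n} be a matrix that is not a scalar matrix (A ≠ αI for all α ∈ F). Then dim C_F(A,λ) ≤ n² − n. -/
open Matrix Module

/-!
A non-scalar matrix `A` has a vector `v` that is not an eigenvector. If a rank-one matrix `v wᵀ`
satisfies `A v wᵀ = λ v wᵀ A`, i.e. `(A v) wᵀ = λ v (wᵀ A)`, then any nonzero entry `w j` would
make `A v` a multiple of `v`; so `w = 0`. Hence the `n`-dimensional space `{v wᵀ}` meets the twisted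
centralizer trivially, and the centralizer has dimension at most `n² - n`.
-/

theorem finrank_range_vecMulVecBilin {F m n : Type*} [Field F] [Fintype n] {v : m → F}
    (hv : v ≠ 0) :
    finrank F (LinearMap.range (vecMulVecBilin F F v : (n → F) →ₗ[F] Matrix m n F)) =
      Fintype.card n := by
  obtain ⟨i, hi : v i ≠ 0⟩ := Function.ne_iff.mp hv
  refine (LinearMap.finrank_range_of_inj ?_).trans (finrank_fintype_fun_eq_card F)
  exact (injective_iff_map_eq_zero _).2 fun w hw ↦ funext fun j ↦ by
    simpa [vecMulVec_apply, hi] using congrFun₂ hw i j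

section

variable {F m : Type*} [Field F] [Fintype m] [DecidableEq m]

theorem Matrix.exists_forall_mulVec_ne_smul {A : Matrix m m F}
    (hA : ∀ α : F, A ≠ α • (1 : Matrix m m F)) :
    ∃ v : m → F, ∀ c : F, A *ᵥ v ≠ c • v := by
  by_contra! h
  obtain ⟨a, ha⟩ := (toLin' A).exists_eq_smul_id_of_forall_notLinearIndependent fun v ↦ by
    rcases eq_or_ne v 0 with rfl | hv
    · simp [linearIndependent_fin2]
    · obtain ⟨c, hc⟩ := h v
      simpa [LinearIndependent.pair_iff' hv] using ⟨c, hc.symm⟩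
  refine hA a ?_
  simpa using congrArg LinearMap.toMatrix' ha

theorem eq_zero_of_vecMulVec_mem_twistedCentralizer {A : Matrix m m F} {lam : F} {v w : m → F}
    (hv : ∀ c : F, A *ᵥ v ≠ c • v) (hw : vecMulVec v w ∈ twistedCentralizer A lam) :
    w = 0 := by
  have hvw : vecMulVec (A *ᵥ v) w = lam • vecMulVec v (w ᵥ* A) := by
    simpa [twistedCentralizer, sub_eq_zero, mul_vecMulVec, vecMulVec_mul] using hw
  by_contra! hw0
  obtain ⟨j, hj : w j ≠ 0⟩ := Function.ne_iff.mp hw0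
  refine hv (lam * (w ᵥ* A) j / w j) (funext fun i ↦ ?_)
  have hij := congrFun₂ hvw i j
  simp only [vecMulVec_apply, Matrix.smul_apply, smul_eq_mul] at hij
  simp only [Pi.smul_apply, smul_eq_mul]
  field_simp
  linear_combination hij

theorem disjoint_range_vecMulVecBilin_twistedCentralizer {A : Matrix m m F} {lam : F} {v : m → F}
    (hv : ∀ c : F, A *ᵥ v ≠ c • v) :
    Disjoint (LinearMap.range (vecMulVecBilin F F v : (m → F) →ₗ[F] Matrix m m F))
      (twistedCentralizer A lam) := by
  rw [Submodule.disjoint_def]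
  rintro _ ⟨w, rfl⟩ hw
  simp [eq_zero_of_vecMulVec_mem_twistedCentralizer hv hw]

theorem finrank_twistedCentralizer_le {A : Matrix m m F} (lam : F)
    (hA : ∀ α : F, A ≠ α • (1 : Matrix m m F)) :
    finrank F (twistedCentralizer A lam) ≤ Fintype.card m ^ 2 - Fintype.card m := by
  obtain ⟨v, hv⟩ := exists_forall_mulVec_ne_smul hA
  have hv0 : v ≠ 0 := fun h ↦ hv 0 (by simp [h])
  have hsum := Submodule.finrank_add_finrank_le_of_disjoint
    (disjoint_range_vecMulVecBilin_twistedCentralizer (lam := lam) hv)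
  rw [finrank_range_vecMulVecBilin hv0, finrank_matrix, finrank_self, mul_one] at hsum
  rw [sq]
  omega

end

theorem dim_twistedCentralizer_le_nonscalar {F : Type*} [Field F] {n : ℕ}
    (lam : F) (A : Matrix (Fin n) (Fin n) F)
    (hA : ∀ α : F, A ≠ α • (1 : Matrix (Fin n) (Fin n) F)) :
    finrank F (twistedCentralizer A lam) ≤ n ^ 2 - n := by
  simpa using finrank_twistedCentralizer_le lam hA
end
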